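/- Let r and R be real numbers with 0 < R/2 < r < R, let Θ ∈ (0, π), let κ ∈ [1/R, 1/r], and let d be a real number with 2r·sin Θ ≤ d ≤ 2R·sin Θ. Then: (a) for every real t with t > −2r/(2(R/r) − 1), one has d + t(κd − sin Θ) > 0; and (b) for every real t with t < −2R/(2(r/R) − 1), one has d + t(κd − sin Θ) < 0. -/

import Mathlib

open Real Set

/-! The quantity `κ d - sin Θ` is squeezed between `(2r/R - 1) sin Θ ≥ 0` and
`(2R/r - 1) sin Θ`, while `d` lies between `2r sin Θ` and `2R sin Θ`. For `t ≥ 0` positivity is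
clear; for negative `t` the worst case pairs the extreme chord with the extreme value of
`κ d - sin Θ`, leaving `(2r + t(2R/r - 1)) sin Θ` resp. `(2R + t(2r/R - 1)) sin Θ`, whose sign is
exactly the threshold condition on `t`. -/

lemma le_curvature_mul_chord {r R κ d s : ℝ} (hr : 0 ≤ r) (hR : 0 < R) (hs : 0 ≤ s)
    (hκ : 1 / R ≤ κ) (hd : 2 * r * s ≤ d) : 2 * (r / R) * s ≤ κ * d :=
  calc 2 * (r / R) * s = 1 / R * (2 * r * s) := by ring
    _ ≤ κ * (2 * r * s) := by gcongr
    _ ≤ κ * d := by gcongr; exact (one_div_pos.mpr hR).trans_le hκ |>.le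

lemma curvature_mul_chord_le {r R κ d s : ℝ} (hr : 0 < r) (hd₀ : 0 ≤ d)
    (hκ : κ ≤ 1 / r) (hd : d ≤ 2 * R * s) : κ * d ≤ 2 * (R / r) * s :=
  calc κ * d ≤ 1 / r * d := by gcongr
    _ ≤ 1 / r * (2 * R * s) := by gcongr
    _ = 2 * (R / r) * s := by ring

lemma add_mul_pos_of_neg_div_lt {a M s d A t : ℝ} (ha : 0 < a) (hs : 0 < s) (hM : 0 < M)
    (hd : a * s ≤ d) (hA₀ : 0 ≤ A) (hA : A ≤ M * s) (ht : -a / M < t) : 0 < d + t * A := by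
  have hd₀ : 0 < d := (mul_pos ha hs).trans_le hd
  rcases le_or_gt 0 t with ht₀ | ht₀
  · positivity
  · have hthreshold : 0 < a + t * M := by
      have := (div_lt_iff₀ hM).mp ht
      linarith
    calc 0 < (a + t * M) * s := mul_pos hthreshold hs
      _ = a * s + t * (M * s) := by ring
      _ ≤ d + t * A := add_le_add hd (mul_le_mul_of_nonpos_left hA ht₀.le)

lemma add_mul_neg_of_lt_neg_div {b m s d A t : ℝ} (hb : 0 < b) (hs : 0 < s) (hm : 0 < m)
    (hd : d ≤ b * s) (hA : m * s ≤ A) (ht : t < -b / m) : d + t * A < 0 := by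
  have ht₀ : t < 0 := ht.trans (by rw [neg_div]; exact neg_neg_of_pos (div_pos hb hm))
  have hthreshold : b + t * m < 0 := by
    have := (lt_div_iff₀ hm).mp ht
    linarith
  calc d + t * A ≤ b * s + t * (m * s) := add_le_add hd (mul_le_mul_of_nonpos_left hA ht₀.le)
    _ = (b + t * m) * s := by ring
    _ < 0 := mul_neg_of_neg_of_pos hthreshold hs

theorem twist_inequality (r R Θ κ d : ℝ)
    (h2 : R / 2 < r) (h3 : r < R)
    (hΘ : Θ ∈ Set.Ioo 0 Real.pi)
    (hκ : κ ∈ Set.Icc (1 / R) (1 / r))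
    (hd1 : 2 * r * Real.sin Θ ≤ d) (hd2 : d ≤ 2 * R * Real.sin Θ) :
    (∀ t : ℝ, -(2 * r) / (2 * (R / r) - 1) < t → 0 < d + t * (κ * d - Real.sin Θ)) ∧
    (∀ t : ℝ, t < -(2 * R) / (2 * (r / R) - 1) → d + t * (κ * d - Real.sin Θ) < 0) := by
  have hR : 0 < R := by linarith
  have hr : 0 < r := by linarith
  have hs : 0 < sin Θ := sin_pos_of_pos_of_lt_pi hΘ.1 hΘ.2
  have hd₀ : 0 ≤ d := (by positivity : 0 ≤ 2 * r * sin Θ).trans hd1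
  have hlow : (2 * (r / R) - 1) * sin Θ ≤ κ * d - sin Θ := by
    linarith [le_curvature_mul_chord hr.le hR hs.le hκ.1 hd1]
  have hhigh : κ * d - sin Θ ≤ (2 * (R / r) - 1) * sin Θ := by
    linarith [curvature_mul_chord_le hr hd₀ hκ.2 hd2]
  have hm : 0 < 2 * (r / R) - 1 := by
    have : 1 / 2 < r / R := by rw [div_lt_div_iff₀ two_pos hR]; linarith
    linarith
  have hM : 0 < 2 * (R / r) - 1 := by
    have : 1 < R / r := (one_lt_div hr).mpr h3
    linarith
  exact ⟨fun t ht => add_mul_pos_of_neg_div_lt (by positivity) hs hM hd1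
      ((mul_pos hm hs).le.trans hlow) hhigh ht,
    fun t ht => add_mul_neg_of_lt_neg_div (by positivity) hs hm hd2 hlow ht⟩
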